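/- arXiv:1010.0136 — 8 statements merged into one kernel-verified Lean document; each statement's English description precedes it below -/
import Mathlib

section
/- Let H be a complex Hilbert space and let u, v, w be unit vectors in H. Then δ(u,w) ≤ δ(u,v) + δ(v,w), where δ(a,b) = √(1 − |⟨a,b⟩|²). In particular δ is a pseudometric on the unit sphere of H (and hence the function δ_H(x,y) = √(1 − |⟨k̂_x,k̂_y⟩|²) associated to a reproducing kernel Hilbert space is a pseudometric on the underlying set). -/
/-!
`√(1 - ‖⟪u, v⟫‖²)` is the distance from the unit vector `u` to the line `𝕜 ∙ v`, attained at the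
orthogonal projection `⟪v, u⟫ • v`. Writing `u = ⟪v, u⟫ • v + x` and `v = ⟪w, v⟫ • w + y`, the
point `⟪v, u⟫ * ⟪w, v⟫ • w` of the line `𝕜 ∙ w` lies within `‖x‖ + |⟪v, u⟫| ‖y‖ ≤ ‖x‖ + ‖y‖`
of `u`.
-/

open scoped InnerProductSpace

section LineDistance

variable {𝕜 E : Type*} [RCLike 𝕜] [NormedAddCommGroup E] [InnerProductSpace 𝕜 E] {v : E}

theorem norm_sub_inner_smul_sq_of_norm_eq_one (hv : ‖v‖ = 1) (u : E) :
    ‖u - ⟪v, u⟫_𝕜 • v‖ ^ 2 = ‖u‖ ^ 2 - ‖⟪v, u⟫_𝕜‖ ^ 2 := by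
  rw [norm_sub_sq (𝕜 := 𝕜), inner_smul_right, ← inner_conj_symm, RCLike.conj_mul, norm_smul, hv,
    ← RCLike.ofReal_pow, RCLike.ofReal_re, RCLike.norm_conj]
  ring

theorem norm_sub_inner_smul_le_of_norm_eq_one (hv : ‖v‖ = 1) (u : E) (c : 𝕜) :
    ‖u - ⟪v, u⟫_𝕜 • v‖ ≤ ‖u - c • v‖ := by
  rw [← Submodule.starProjection_unit_singleton 𝕜 hv, Submodule.starProjection_minimal]
  exact ciInf_le (f := fun x : 𝕜 ∙ v ↦ ‖u - x‖) ⟨0, by rintro _ ⟨_, rfl⟩; positivity⟩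
    ⟨c • v, Submodule.smul_mem _ c (Submodule.mem_span_singleton_self v)⟩

theorem sqrt_one_sub_norm_inner_sq_eq_norm_sub {u : E} (hu : ‖u‖ = 1) (hv : ‖v‖ = 1) :
    √(1 - ‖⟪u, v⟫_𝕜‖ ^ 2) = ‖u - ⟪v, u⟫_𝕜 • v‖ := by
  have hsq := norm_sub_inner_smul_sq_of_norm_eq_one (𝕜 := 𝕜) hv u
  rw [hu, one_pow] at hsq
  rw [norm_inner_symm, ← hsq, Real.sqrt_sq (norm_nonneg _)]

theorem norm_sub_inner_smul_le_add {u w : E} (hu : ‖u‖ = 1) (hv : ‖v‖ = 1) (hw : ‖w‖ = 1) :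
    ‖u - ⟪w, u⟫_𝕜 • w‖ ≤ ‖u - ⟪v, u⟫_𝕜 • v‖ + ‖v - ⟪w, v⟫_𝕜 • w‖ := by
  have hvu : ‖⟪v, u⟫_𝕜‖ ≤ 1 := by simpa [hu, hv] using norm_inner_le_norm (𝕜 := 𝕜) v u
  calc ‖u - ⟪w, u⟫_𝕜 • w‖
      ≤ ‖u - (⟪v, u⟫_𝕜 * ⟪w, v⟫_𝕜) • w‖ := norm_sub_inner_smul_le_of_norm_eq_one hw u _
    _ = ‖(u - ⟪v, u⟫_𝕜 • v) + ⟪v, u⟫_𝕜 • (v - ⟪w, v⟫_𝕜 • w)‖ := by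
        rw [smul_sub, mul_smul, add_sub, sub_add_cancel]
    _ ≤ ‖u - ⟪v, u⟫_𝕜 • v‖ + ‖⟪v, u⟫_𝕜‖ * ‖v - ⟪w, v⟫_𝕜 • w‖ := by
        grw [norm_add_le, norm_smul]
    _ ≤ ‖u - ⟪v, u⟫_𝕜 • v‖ + ‖v - ⟪w, v⟫_𝕜 • w‖ := by
        gcongr
        exact mul_le_of_le_one_left (norm_nonneg _) hvu

end LineDistance

/-- For unit vectors `u, v, w` in a complex Hilbert space,
`δ(u,w) ≤ δ(u,v) + δ(v,w)` where `δ(a,b) = √(1 − |⟨a,b⟩|²)`; hence `δ` is a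
pseudometric on the unit sphere (and the function
`δ_H(x,y) = √(1 − |⟨k̂_x,k̂_y⟩|²)` of a RKHS is a pseudometric on the
underlying set). -/
theorem delta_triangle {H : Type*} [NormedAddCommGroup H] [InnerProductSpace ℂ H]
    (u v w : H) (hu : ‖u‖ = 1) (hv : ‖v‖ = 1) (hw : ‖w‖ = 1) :
    Real.sqrt (1 - ‖(inner ℂ u w : ℂ)‖ ^ 2)
      ≤ Real.sqrt (1 - ‖(inner ℂ u v : ℂ)‖ ^ 2) + Real.sqrt (1 - ‖(inner ℂ v w : ℂ)‖ ^ 2) := by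
  rw [sqrt_one_sub_norm_inner_sq_eq_norm_sub hu hw, sqrt_one_sub_norm_inner_sq_eq_norm_sub hu hv,
    sqrt_one_sub_norm_inner_sq_eq_norm_sub hv hw]
  exact norm_sub_inner_smul_le_add hu hv hw
end

section
/- Let u, v be unit vectors in a complex Hilbert space H and let P_u, P_v be the orthogonal projections onto ℂu and ℂv. Then the operator norm of the commutator satisfies ‖P_uP_v − P_vP_u‖² = δ(u,v)²(1 − δ(u,v)²) = |⟨u,v⟩|²(1 − |⟨u,v⟩|²), where δ(u,v) = √(1 − |⟨u,v⟩|²). -/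
/-- The orthogonal projection of `H` onto the line `ℂ • u` spanned by a unit
vector `u`, as a continuous linear map `H →L[ℂ] H`: `P u f = ⟪u, f⟫ • u`. -/
noncomputable def rankOneProj {H : Type*} [NormedAddCommGroup H] [InnerProductSpace ℂ H]
    (u : H) : H →L[ℂ] H :=
  (innerSL ℂ u).smulRight u

/-!
Let `c = ⟪u, v⟫` and let `w = u - ⟪v, u⟫ • v` be the component of `u` orthogonal to `v`, so that
`‖w‖² = 1 - |c|²`. The commutator sends `f` to `(c ⟪v, f⟫) • w - (c̄ ⟪w, f⟫) • v`, a sum of two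
orthogonal vectors, hence `‖[P_u, P_v] f‖² = |c|² (‖w‖² |⟪v, f⟫|² + |⟪w, f⟫|²)`. By Bessel's
inequality this is at most `|c|² ‖w‖² ‖f‖²`, with equality at `f = v`.
-/

open scoped InnerProductSpace

section

variable {H : Type*} [NormedAddCommGroup H] [InnerProductSpace ℂ H]

theorem rankOneProj_apply (u f : H) : rankOneProj u f = ⟪u, f⟫_ℂ • u := rfl

theorem inner_sub_inner_smul_self {v : H} (hv : ‖v‖ = 1) (f : H) :
    ⟪f - ⟪v, f⟫_ℂ • v, v⟫_ℂ = 0 := by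
  rw [inner_sub_left, inner_smul_left, inner_conj_symm, inner_self_eq_one_of_norm_eq_one hv,
    mul_one, sub_self]

theorem norm_sub_inner_smul_sq {v : H} (hv : ‖v‖ = 1) (f : H) :
    ‖f - ⟪v, f⟫_ℂ • v‖ ^ 2 = ‖f‖ ^ 2 - ‖⟪v, f⟫_ℂ‖ ^ 2 := by
  have h := norm_add_sq_eq_norm_sq_add_norm_sq_of_inner_eq_zero (𝕜 := ℂ) (f - ⟪v, f⟫_ℂ • v)
    (⟪v, f⟫_ℂ • v) (by rw [inner_smul_right, inner_sub_inner_smul_self hv, mul_zero])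
  rw [sub_add_cancel, norm_smul, hv, mul_one] at h
  linarith

/-- Bessel's inequality for the orthogonal pair `v`, `w / ‖w‖`, cleared of denominators. -/
theorem sq_norm_mul_sq_norm_inner_add_le {v w : H} (hv : ‖v‖ = 1) (hvw : ⟪w, v⟫_ℂ = 0)
    (f : H) : ‖w‖ ^ 2 * ‖⟪v, f⟫_ℂ‖ ^ 2 + ‖⟪w, f⟫_ℂ‖ ^ 2 ≤ ‖w‖ ^ 2 * ‖f‖ ^ 2 := by
  have hwf : ⟪w, f⟫_ℂ = ⟪w, f - ⟪v, f⟫_ℂ • v⟫_ℂ := by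
    rw [inner_sub_right, inner_smul_right, hvw, mul_zero, sub_zero]
  have hcs : ‖⟪w, f⟫_ℂ‖ ^ 2 ≤ ‖w‖ ^ 2 * (‖f‖ ^ 2 - ‖⟪v, f⟫_ℂ‖ ^ 2) := by
    rw [hwf, ← norm_sub_inner_smul_sq hv, ← mul_pow]
    gcongr
    exact norm_inner_le_norm _ _
  linarith

theorem commutator_rankOneProj_apply (u v f : H) :
    ((rankOneProj u).comp (rankOneProj v) - (rankOneProj v).comp (rankOneProj u)) f =
      (⟪u, v⟫_ℂ * ⟪v, f⟫_ℂ) • (u - ⟪v, u⟫_ℂ • v)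
        - (⟪v, u⟫_ℂ * ⟪u - ⟪v, u⟫_ℂ • v, f⟫_ℂ) • v := by
  simp only [sub_apply, ContinuousLinearMap.comp_apply, rankOneProj_apply,
    inner_smul_right, inner_sub_left, inner_smul_left, inner_conj_symm, smul_sub, smul_smul]
  module

theorem norm_commutator_rankOneProj_apply_sq (u : H) {v : H} (hv : ‖v‖ = 1) (f : H) :
    ‖((rankOneProj u).comp (rankOneProj v) - (rankOneProj v).comp (rankOneProj u)) f‖ ^ 2 =
      ‖⟪u, v⟫_ℂ‖ ^ 2
        * (‖u - ⟪v, u⟫_ℂ • v‖ ^ 2 * ‖⟪v, f⟫_ℂ‖ ^ 2 + ‖⟪u - ⟪v, u⟫_ℂ • v, f⟫_ℂ‖ ^ 2) := by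
  rw [commutator_rankOneProj_apply, norm_sub_sq (𝕜 := ℂ), inner_smul_left, inner_smul_right,
    inner_sub_inner_smul_self hv, mul_zero, mul_zero, map_zero, mul_zero, sub_zero, norm_smul,
    norm_smul, norm_mul, norm_mul, hv, mul_one, ← inner_conj_symm v u, RCLike.norm_conj]
  ring

theorem norm_commutator_rankOneProj (u : H) {v : H} (hv : ‖v‖ = 1) :
    ‖(rankOneProj u).comp (rankOneProj v) - (rankOneProj v).comp (rankOneProj u)‖ =
      ‖⟪u, v⟫_ℂ‖ * ‖u - ⟪v, u⟫_ℂ • v‖ := by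
  set T := (rankOneProj u).comp (rankOneProj v) - (rankOneProj v).comp (rankOneProj u)
  set w := u - ⟪v, u⟫_ℂ • v
  have hwv : ⟪w, v⟫_ℂ = 0 := inner_sub_inner_smul_self hv u
  have hbound : ∀ f, ‖T f‖ ≤ ‖⟪u, v⟫_ℂ‖ * ‖w‖ * ‖f‖ := by
    intro f
    refine pow_le_pow_iff_left₀ (norm_nonneg _) (by positivity) two_ne_zero |>.mp ?_
    rw [norm_commutator_rankOneProj_apply_sq u hv, mul_pow, mul_pow, mul_assoc]
    gcongr
    exact sq_norm_mul_sq_norm_inner_add_le hv hwv f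
  have hTv : ‖T v‖ = ‖⟪u, v⟫_ℂ‖ * ‖w‖ := by
    refine (pow_left_inj₀ (norm_nonneg _) (by positivity) two_ne_zero).mp ?_
    rw [norm_commutator_rankOneProj_apply_sq u hv, hwv, inner_self_eq_one_of_norm_eq_one hv,
      norm_one, norm_zero]
    ring
  refine le_antisymm (T.opNorm_le_bound (by positivity) hbound) ?_
  calc ‖⟪u, v⟫_ℂ‖ * ‖w‖ = ‖T v‖ := hTv.symm
    _ ≤ ‖T‖ := by simpa [hv] using T.le_opNorm v

end

/-- For unit vectors `u, v`, the operator norm of the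
commutator satisfies
`‖P_uP_v − P_vP_u‖² = δ(u,v)²(1 − δ(u,v)²) = |⟨u,v⟩|²(1 − |⟨u,v⟩|²)`,
where `δ(u,v) = √(1 − |⟨u,v⟩|²)`. -/
theorem norm_commutator_projections {H : Type*} [NormedAddCommGroup H]
    [InnerProductSpace ℂ H] (u v : H) (hu : ‖u‖ = 1) (hv : ‖v‖ = 1) :
    ‖(rankOneProj u).comp (rankOneProj v) - (rankOneProj v).comp (rankOneProj u)‖ ^ 2
        = Real.sqrt (1 - ‖(inner ℂ u v : ℂ)‖ ^ 2) ^ 2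
            * (1 - Real.sqrt (1 - ‖(inner ℂ u v : ℂ)‖ ^ 2) ^ 2) ∧
    ‖(rankOneProj u).comp (rankOneProj v) - (rankOneProj v).comp (rankOneProj u)‖ ^ 2
        = ‖(inner ℂ u v : ℂ)‖ ^ 2 * (1 - ‖(inner ℂ u v : ℂ)‖ ^ 2) := by
  have hw : ‖u - ⟪v, u⟫_ℂ • v‖ ^ 2 = 1 - ‖⟪u, v⟫_ℂ‖ ^ 2 := by
    rw [norm_sub_inner_smul_sq hv, hu, one_pow, ← inner_conj_symm, RCLike.norm_conj]
  rw [norm_commutator_rankOneProj u hv, mul_pow, hw, Real.sq_sqrt (hw ▸ sq_nonneg _)]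
  exact ⟨by ring, rfl⟩
end

section
/- Let M be a bounded linear operator on a complex Hilbert space H, let u, v be unit vectors in H, and suppose a, b ∈ ℂ satisfy M*u = ā·u and M*v = b̄·v (where M* is the Hilbert-space adjoint and ā denotes complex conjugation). Then |a − b| ≤ 2‖M‖·δ(u,v), where δ(u,v) = √(1 − |⟨u,v⟩|²). -/
/-!
Since `M† u = ā • u` and `M† v = b̄ • v`, the numbers `ā, b̄` are the values `⟪u, M† u⟫`, `⟪v, M† v⟫`
of the quadratic form of `T = M†`, so it suffices to bound `|⟪u, T u⟫ - ⟪v, T v⟫|`.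
Polarization gives `2 (⟪u, T u⟫ - ⟪v, T v⟫) = ⟪u + v, T (u - v)⟫ + ⟪u - v, T (u + v)⟫`, whence
`|⟪u, T u⟫ - ⟪v, T v⟫| ≤ ‖T‖ ‖u + v‖ ‖u - v‖ = 2 ‖T‖ √(1 - (re ⟪u, v⟫)²)`.
Rotating `v` by a unimodular scalar changes neither `⟪v, T v⟫` nor `|⟪u, v⟫|` and makes `⟪u, v⟫`
real and nonnegative, which turns `re ⟪u, v⟫` into `|⟪u, v⟫|`.
-/

open RCLike

namespace InnerProductSpace

variable {𝕜 E : Type*} [RCLike 𝕜] [NormedAddCommGroup E] [InnerProductSpace 𝕜 E]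

local notation "⟪" x ", " y "⟫" => inner 𝕜 x y

lemma inner_map_self_eq_of_apply_eq_smul {T : E →L[𝕜] E} {u : E} {c : 𝕜} (hu : ‖u‖ = 1)
    (hTu : T u = c • u) : ⟪u, T u⟫ = c := by
  rw [hTu, inner_smul_right, inner_self_eq_norm_sq_to_K, hu]
  simp

lemma two_mul_inner_map_self_sub (T : E →L[𝕜] E) (u v : E) :
    2 * (⟪u, T u⟫ - ⟪v, T v⟫) = ⟪u + v, T (u - v)⟫ + ⟪u - v, T (u + v)⟫ := by
  simp only [map_add, map_sub, inner_add_left, inner_sub_left, inner_add_right, inner_sub_right]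
  ring

lemma norm_inner_map_self_sub_le (T : E →L[𝕜] E) (u v : E) :
    ‖⟪u, T u⟫ - ⟪v, T v⟫‖ ≤ ‖T‖ * (‖u + v‖ * ‖u - v‖) := by
  have hbound (x y : E) : ‖⟪x, T y⟫‖ ≤ ‖T‖ * (‖x‖ * ‖y‖) :=
    calc ‖⟪x, T y⟫‖ ≤ ‖x‖ * ‖T y‖ := norm_inner_le_norm x (T y)
      _ ≤ ‖x‖ * (‖T‖ * ‖y‖) := by gcongr; exact T.le_opNorm y
      _ = ‖T‖ * (‖x‖ * ‖y‖) := by ring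
  have htwice : 2 * ‖⟪u, T u⟫ - ⟪v, T v⟫‖ ≤ 2 * (‖T‖ * (‖u + v‖ * ‖u - v‖)) :=
    calc 2 * ‖⟪u, T u⟫ - ⟪v, T v⟫‖ = ‖⟪u + v, T (u - v)⟫ + ⟪u - v, T (u + v)⟫‖ := by
          rw [← two_mul_inner_map_self_sub, norm_mul, norm_two]
      _ ≤ ‖⟪u + v, T (u - v)⟫‖ + ‖⟪u - v, T (u + v)⟫‖ := norm_add_le _ _
      _ ≤ ‖T‖ * (‖u + v‖ * ‖u - v‖) + ‖T‖ * (‖u - v‖ * ‖u + v‖) :=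
          add_le_add (hbound _ _) (hbound _ _)
      _ = 2 * (‖T‖ * (‖u + v‖ * ‖u - v‖)) := by ring
  linarith

lemma norm_add_mul_norm_sub_of_norm_eq_one {u v : E} (hu : ‖u‖ = 1) (hv : ‖v‖ = 1) :
    ‖u + v‖ * ‖u - v‖ = 2 * √(1 - re ⟪u, v⟫ ^ 2) := by
  have hsq : (‖u + v‖ * ‖u - v‖) ^ 2 = 2 ^ 2 * (1 - re ⟪u, v⟫ ^ 2) := by
    rw [mul_pow, norm_add_sq (𝕜 := 𝕜), norm_sub_sq (𝕜 := 𝕜), hu, hv]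
    ring
  rw [← Real.sqrt_sq (by positivity : 0 ≤ ‖u + v‖ * ‖u - v‖), hsq,
    Real.sqrt_mul (by norm_num), Real.sqrt_sq (by norm_num)]

lemma exists_norm_eq_one_inner_smul_eq_norm (u v : E) :
    ∃ c : 𝕜, ‖c‖ = 1 ∧ ⟪u, c • v⟫ = ‖⟪u, v⟫‖ := by
  obtain ⟨c, hc, hnorm⟩ := exists_norm_eq_mul_self ⟪u, v⟫
  exact ⟨c, hc, by rw [inner_smul_right, hnorm]⟩

lemma inner_smul_map_smul_of_norm_eq_one (T : E →L[𝕜] E) {c : 𝕜} (hc : ‖c‖ = 1) (v : E) :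
    ⟪c • v, T (c • v)⟫ = ⟪v, T v⟫ := by
  rw [map_smul, inner_smul_left, inner_smul_right, ← mul_assoc, RCLike.conj_mul, hc]
  simp

theorem norm_inner_map_self_sub_le_two_mul_opNorm_mul_sqrt (T : E →L[𝕜] E) {u v : E}
    (hu : ‖u‖ = 1) (hv : ‖v‖ = 1) :
    ‖⟪u, T u⟫ - ⟪v, T v⟫‖ ≤ 2 * ‖T‖ * √(1 - ‖⟪u, v⟫‖ ^ 2) := by
  obtain ⟨c, hc, hphase⟩ := exists_norm_eq_one_inner_smul_eq_norm (𝕜 := 𝕜) u v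
  have hcv : ‖c • v‖ = 1 := by rw [norm_smul, hc, hv, one_mul]
  have hre : re ⟪u, c • v⟫ = ‖⟪u, v⟫‖ := by rw [hphase, ofReal_re]
  calc ‖⟪u, T u⟫ - ⟪v, T v⟫‖ = ‖⟪u, T u⟫ - ⟪c • v, T (c • v)⟫‖ := by
        rw [inner_smul_map_smul_of_norm_eq_one T hc]
    _ ≤ ‖T‖ * (‖u + c • v‖ * ‖u - c • v‖) := norm_inner_map_self_sub_le T u (c • v)
    _ = 2 * ‖T‖ * √(1 - ‖⟪u, v⟫‖ ^ 2) := by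
        rw [norm_add_mul_norm_sub_of_norm_eq_one (𝕜 := 𝕜) hu hcv, hre]
        ring

end InnerProductSpace

open InnerProductSpace ContinuousLinearMap

/-- multiplier Lipschitz estimate. Let `M` be a bounded
operator on a complex Hilbert space, `u, v` unit vectors, and `a, b ∈ ℂ` with
`M*u = ā·u` and `M*v = b̄·v`. Then `|a − b| ≤ 2‖M‖·δ(u,v)` where
`δ(u,v) = √(1 − |⟨u,v⟩|²)`. -/
theorem multiplier_lipschitz {H : Type*} [NormedAddCommGroup H] [InnerProductSpace ℂ H]
    [CompleteSpace H] (M : H →L[ℂ] H) (u v : H) (hu : ‖u‖ = 1) (hv : ‖v‖ = 1)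
    (a b : ℂ)
    (hMu : ContinuousLinearMap.adjoint M u = (starRingEnd ℂ a) • u)
    (hMv : ContinuousLinearMap.adjoint M v = (starRingEnd ℂ b) • v) :
    ‖a - b‖ ≤ 2 * ‖M‖ * Real.sqrt (1 - ‖(inner ℂ u v : ℂ)‖ ^ 2) := by
  have hestimate := norm_inner_map_self_sub_le_two_mul_opNorm_mul_sqrt (adjoint M) hu hv
  rwa [inner_map_self_eq_of_apply_eq_smul hu hMu, inner_map_self_eq_of_apply_eq_smul hv hMv,
    ← map_sub, norm_conj, LinearIsometryEquiv.norm_map] at hestimate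
end

section
/- Let M be a bounded linear operator on a complex Hilbert space H with ‖M‖ ≤ 1, let u, v be unit vectors in H, and suppose b ∈ ℂ satisfies M*u = 0 and M*v = b̄·v. Then |b| ≤ δ(u,v) = √(1 − |⟨u,v⟩|²). -/
/-!
Since `M* u = 0`, the vector `M* v = b̄ v` is also the image of `v - ⟪u, v⟫ u`, the component of
`v` orthogonal to `u`. As `‖M*‖ = ‖M‖ ≤ 1`, this gives `|b| ≤ ‖v - ⟪u, v⟫ u‖`, and Pythagoras
gives `‖v - ⟪u, v⟫ u‖² = 1 - |⟪u, v⟫|²`.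
-/

open scoped InnerProductSpace

theorem norm_sub_inner_smul_sq_s11 {𝕜 E : Type*} [RCLike 𝕜] [NormedAddCommGroup E]
    [InnerProductSpace 𝕜 E] {u : E} (hu : ‖u‖ = 1) (v : E) :
    ‖v - ⟪u, v⟫_𝕜 • u‖ ^ 2 = ‖v‖ ^ 2 - ‖⟪u, v⟫_𝕜‖ ^ 2 := by
  have hcross : ⟪v, ⟪u, v⟫_𝕜 • u⟫_𝕜 = (‖⟪u, v⟫_𝕜‖ ^ 2 : ℝ) := by
    rw [inner_smul_right, ← inner_conj_symm v u, RCLike.mul_conj]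
    norm_cast
  rw [@norm_sub_sq 𝕜, hcross, RCLike.ofReal_re, norm_smul, hu]
  ring

theorem ContinuousLinearMap.norm_apply_le_of_apply_eq_zero {𝕜 E F : Type*}
    [NontriviallyNormedField 𝕜] [SeminormedAddCommGroup E] [SeminormedAddCommGroup F]
    [NormedSpace 𝕜 E] [NormedSpace 𝕜 F] (T : E →L[𝕜] F) {u : E} (hTu : T u = 0)
    (v : E) (c : 𝕜) : ‖T v‖ ≤ ‖T‖ * ‖v - c • u‖ := by
  simpa [hTu] using T.le_opNorm (v - c • u)

/-- contractive multiplier bound. Let `M` be a bounded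
operator on a complex Hilbert space with `‖M‖ ≤ 1`, `u, v` unit vectors, and
`b ∈ ℂ` with `M*u = 0` and `M*v = b̄·v`. Then
`|b| ≤ δ(u,v) = √(1 − |⟨u,v⟩|²)`. -/
theorem contractive_multiplier_bound {H : Type*} [NormedAddCommGroup H]
    [InnerProductSpace ℂ H] [CompleteSpace H] (M : H →L[ℂ] H) (hM : ‖M‖ ≤ 1)
    (u v : H) (hu : ‖u‖ = 1) (hv : ‖v‖ = 1) (b : ℂ)
    (hMu : ContinuousLinearMap.adjoint M u = 0)
    (hMv : ContinuousLinearMap.adjoint M v = (starRingEnd ℂ b) • v) :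
    ‖b‖ ≤ Real.sqrt (1 - ‖(inner ℂ u v : ℂ)‖ ^ 2) := by
  have hb : ‖b‖ = ‖ContinuousLinearMap.adjoint M v‖ := by simp [hMv, norm_smul, hv]
  have hdist : √(1 - ‖⟪u, v⟫_ℂ‖ ^ 2) = ‖v - ⟪u, v⟫_ℂ • u‖ := by
    rw [← one_pow 2, ← hv, ← norm_sub_inner_smul_sq_s11 hu, Real.sqrt_sq (norm_nonneg _)]
  rw [hb, hdist]
  calc ‖ContinuousLinearMap.adjoint M v‖
      ≤ ‖ContinuousLinearMap.adjoint M‖ * ‖v - ⟪u, v⟫_ℂ • u‖ :=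
        (ContinuousLinearMap.adjoint M).norm_apply_le_of_apply_eq_zero hMu v _
    _ ≤ ‖v - ⟪u, v⟫_ℂ • u‖ := by
        rw [LinearIsometryEquiv.norm_map]
        exact mul_le_of_le_one_left (norm_nonneg _) hM
end

section
/- Let k_x, k_y, k_z be pairwise linearly independent nonzero vectors in a complex Hilbert space H. Let P be the orthogonal projection onto the orthogonal complement of ℂk_x, and set j_y = Pk_y, j_z = Pk_z (both nonzero by independence). Write δ_{αβ} = √(1 − |⟨k_α,k_β⟩|²/(‖k_α‖²‖k_β‖²)) for α,β ∈ {x,y,z}, and let Υ = Re( ⟨k̂_x,k̂_y⟩·⟨k̂_y,k̂_z⟩·⟨k̂_z,k̂_x⟩ ), where k̂ denotes the normalized vector. Then the distance δ_J(y,z) = √(1 − |⟨j_y,j_z⟩|²/(‖j_y‖²‖j_z‖²)) satisfies δ_J(y,z)² = (δ_{xy}² + δ_{xz}² + δ_{zy}² − 2 + 2Υ) / (δ_{xy}²·δ_{xz}²). -/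
/-!
Since `P k = k - (⟪k_x, k⟫ / ‖k_x‖²) k_x`, one has `⟪j_y, j_z⟫ = ⟪k_y, k_z⟫ - conj ⟪k_x, k_y⟫ ⟪k_x, k_z⟫ / ‖k_x‖²`
and `‖j_y‖² = ‖k_y‖² δ_{xy}²`. Expanding `|⟪j_y, j_z⟫|²`, the cross term is
`2 Re (⟪k_x, k_y⟫ ⟪k_y, k_z⟫ ⟪k_z, k_x⟫) / ‖k_x‖²`, which is `2 Υ ‖k_y‖² ‖k_z‖²`; what is left is a rational
identity, whose denominators `δ_{xy}`, `δ_{xz}` are nonzero by the strict Cauchy–Schwarz inequality.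
-/

variable {H : Type*} [NormedAddCommGroup H] [InnerProductSpace ℂ H]

/-- `δ(a,b) = √(1 − |⟨a,b⟩|²/(‖a‖²‖b‖²))`, the RKHS distance computed from
two (not necessarily normalized) kernel vectors. -/
noncomputable def deltaPair (a b : H) : ℝ :=
  Real.sqrt (1 - ‖(inner ℂ a b : ℂ)‖ ^ 2 / (‖a‖ ^ 2 * ‖b‖ ^ 2))

/-- The projection `j_y = P k_y` of `k_y` onto the orthogonal complement of
`ℂ k_x` (the kernel vector of the subspace of functions vanishing at `x`). -/
noncomputable def jvec [CompleteSpace H] (kx y : H) : H :=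
  (Submodule.orthogonalProjection ((ℂ ∙ kx)ᗮ) y : H)

open ComplexConjugate

theorem LinearIndependent.norm_inner_lt_norm_mul_norm {𝕜 E : Type*} [RCLike 𝕜]
    [NormedAddCommGroup E] [InnerProductSpace 𝕜 E] {u v : E}
    (h : LinearIndependent 𝕜 ![u, v]) : ‖(inner 𝕜 u v : 𝕜)‖ < ‖u‖ * ‖v‖ := by
  have hu : u ≠ 0 := by simpa using h.ne_zero 0
  have hv : v ≠ 0 := by simpa using h.ne_zero 1
  refine (norm_inner_le_norm u v).lt_of_ne fun heq => ?_
  obtain ⟨r, -, rfl⟩ := (norm_inner_eq_norm_iff hu hv).1 heq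
  exact (LinearIndependent.pair_iff' hu).1 h r rfl

theorem deltaPair_sq (u v : H) :
    deltaPair u v ^ 2 = 1 - ‖(inner ℂ u v : ℂ)‖ ^ 2 / (‖u‖ ^ 2 * ‖v‖ ^ 2) := by
  refine Real.sq_sqrt (sub_nonneg.2 (div_le_one_of_le₀ ?_ (by positivity)))
  rw [← mul_pow]
  exact pow_le_pow_left₀ (norm_nonneg _) (norm_inner_le_norm u v) 2

theorem inner_inv_norm_smul_inv_norm_smul (u v : H) :
    inner ℂ (‖u‖⁻¹ • u) (‖v‖⁻¹ • v) = inner ℂ u v / ((‖u‖ * ‖v‖ : ℝ) : ℂ) := by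
  rw [← Complex.coe_smul, ← Complex.coe_smul, inner_smul_left, inner_smul_right,
    Complex.conj_ofReal]
  push_cast
  ring

theorem re_inner_normalized_triple (x y z : H) :
    (inner ℂ (‖x‖⁻¹ • x) (‖y‖⁻¹ • y) * inner ℂ (‖y‖⁻¹ • y) (‖z‖⁻¹ • z)
        * inner ℂ (‖z‖⁻¹ • z) (‖x‖⁻¹ • x)).re
      = (inner ℂ x y * inner ℂ y z * inner ℂ z x).re / (‖x‖ ^ 2 * ‖y‖ ^ 2 * ‖z‖ ^ 2) := by
  simp only [inner_inv_norm_smul_inv_norm_smul]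
  rw [← Complex.div_ofReal_re]
  congr 1
  push_cast
  ring

theorem Complex.norm_sub_conj_mul_div_ofReal_sq (a : ℝ) (p q r : ℂ) :
    ‖r - conj p * q / (a : ℂ)‖ ^ 2
      = ‖r‖ ^ 2 - 2 * (p * r * conj q).re / a + ‖p‖ ^ 2 * ‖q‖ ^ 2 / a ^ 2 := by
  rcases eq_or_ne a 0 with rfl | ha
  · simp
  simp only [Complex.sq_norm, Complex.normSq_apply, Complex.sub_re, Complex.sub_im,
    Complex.div_ofReal_re, Complex.div_ofReal_im, Complex.mul_re, Complex.mul_im,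
    Complex.conj_re, Complex.conj_im]
  field_simp
  ring

section Projection

variable [CompleteSpace H]

theorem jvec_eq (kx w : H) :
    jvec kx w = w - (inner ℂ kx w / ((‖kx‖ ^ 2 : ℝ) : ℂ)) • kx := by
  rw [jvec, Submodule.coe_orthogonalProjectionOnto_apply, Submodule.starProjection_orthogonal_val,
    Submodule.starProjection_singleton, RCLike.ofReal_eq_complex_ofReal]

theorem inner_jvec_jvec (kx u v : H) :
    inner ℂ (jvec kx u) (jvec kx v)
      = inner ℂ u v - conj (inner ℂ kx u) * inner ℂ kx v / ((‖kx‖ ^ 2 : ℝ) : ℂ) := by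
  rcases eq_or_ne kx 0 with rfl | hx
  · simp [jvec_eq]
  rw [jvec_eq, jvec_eq]
  simp only [inner_sub_left, inner_sub_right, inner_smul_left, inner_smul_right,
    inner_self_eq_norm_sq_to_K, map_div₀, Complex.conj_ofReal, RCLike.ofReal_eq_complex_ofReal,
    ← inner_conj_symm u kx]
  have : (‖kx‖ : ℂ) ≠ 0 := by simpa using hx
  push_cast
  field_simp
  ring

theorem norm_jvec_sq (kx u : H) :
    ‖jvec kx u‖ ^ 2 = ‖u‖ ^ 2 - ‖inner ℂ kx u‖ ^ 2 / ‖kx‖ ^ 2 := by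
  have h := inner_jvec_jvec kx u u
  rw [inner_self_eq_norm_sq_to_K, inner_self_eq_norm_sq_to_K, RCLike.conj_mul,
    RCLike.ofReal_eq_complex_ofReal] at h
  exact_mod_cast h

theorem norm_inner_jvec_jvec_sq (kx u v : H) :
    ‖inner ℂ (jvec kx u) (jvec kx v)‖ ^ 2
      = ‖inner ℂ u v‖ ^ 2 - 2 * (inner ℂ kx u * inner ℂ u v * inner ℂ v kx).re / ‖kx‖ ^ 2
        + ‖inner ℂ kx u‖ ^ 2 * ‖inner ℂ kx v‖ ^ 2 / (‖kx‖ ^ 2) ^ 2 := by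
  rw [inner_jvec_jvec, Complex.norm_sub_conj_mul_div_ofReal_sq, inner_conj_symm]

end Projection

theorem one_sub_div_eq_three_point_formula {a b c P Q R T : ℝ} (ha : a ≠ 0) (hb : b ≠ 0)
    (hc : c ≠ 0) (hP : P ≠ a * b) (hQ : Q ≠ a * c) :
    1 - (R - 2 * T / a + P * Q / a ^ 2) / ((b - P / a) * (c - Q / a))
      = ((1 - P / (a * b)) + (1 - Q / (a * c)) + (1 - R / (c * b)) - 2 + 2 * (T / (a * b * c)))
        / ((1 - P / (a * b)) * (1 - Q / (a * c))) := by
  have hP' : a * b - P ≠ 0 := sub_ne_zero.2 hP.symm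
  have hQ' : a * c - Q ≠ 0 := sub_ne_zero.2 hQ.symm
  field_simp
  ring

theorem delta_invariant_subspace_three_points_general [CompleteSpace H]
    (kx ky kz : H)
    (hxy : LinearIndependent ℂ ![kx, ky]) (hxz : LinearIndependent ℂ ![kx, kz]) :
    deltaPair (jvec kx ky) (jvec kx kz) ^ 2
      = (deltaPair kx ky ^ 2 + deltaPair kx kz ^ 2 + deltaPair kz ky ^ 2 - 2
          + 2 * ((inner ℂ (‖kx‖⁻¹ • kx) (‖ky‖⁻¹ • ky) : ℂ)
              * (inner ℂ (‖ky‖⁻¹ • ky) (‖kz‖⁻¹ • kz) : ℂ)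
              * (inner ℂ (‖kz‖⁻¹ • kz) (‖kx‖⁻¹ • kx) : ℂ)).re)
        / (deltaPair kx ky ^ 2 * deltaPair kx kz ^ 2) := by
  have hx : kx ≠ 0 := by simpa using hxy.ne_zero 0
  have hy : ky ≠ 0 := by simpa using hxy.ne_zero 1
  have hz : kz ≠ 0 := by simpa using hxz.ne_zero 1
  have strict_cauchy_schwarz {v : H} (h : LinearIndependent ℂ ![kx, v]) :
      ‖inner ℂ kx v‖ ^ 2 ≠ ‖kx‖ ^ 2 * ‖v‖ ^ 2 := by
    rw [← mul_pow]
    exact (pow_lt_pow_left₀ h.norm_inner_lt_norm_mul_norm (norm_nonneg _) two_ne_zero).ne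
  rw [deltaPair_sq, deltaPair_sq, deltaPair_sq, deltaPair_sq, norm_inner_jvec_jvec_sq,
    norm_jvec_sq, norm_jvec_sq, re_inner_normalized_triple, norm_inner_symm kz ky]
  exact one_sub_div_eq_three_point_formula (by positivity) (by positivity) (by positivity)
    (strict_cauchy_schwarz hxy) (strict_cauchy_schwarz hxz)

/-- three points and the shape invariant. Let
`k_x, k_y, k_z` be pairwise linearly independent nonzero vectors, `P` the
orthogonal projection onto `(ℂk_x)ᗮ`, `j_y = Pk_y`, `j_z = Pk_z`,
`δ_{αβ}` the pairwise distances, and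
`Υ = Re(⟨k̂_x,k̂_y⟩⟨k̂_y,k̂_z⟩⟨k̂_z,k̂_x⟩)` the shape invariant. Then
`δ_J(y,z)² = (δ_{xy}² + δ_{xz}² + δ_{zy}² − 2 + 2Υ)/(δ_{xy}²δ_{xz}²)`. -/
theorem delta_invariant_subspace_three_points [CompleteSpace H]
    (kx ky kz : H) (hx : kx ≠ 0) (hy : ky ≠ 0) (hz : kz ≠ 0)
    (hxy : LinearIndependent ℂ ![kx, ky]) (hxz : LinearIndependent ℂ ![kx, kz])
    (hyz : LinearIndependent ℂ ![ky, kz]) :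
    deltaPair (jvec kx ky) (jvec kx kz) ^ 2
      = (deltaPair kx ky ^ 2 + deltaPair kx kz ^ 2 + deltaPair kz ky ^ 2 - 2
          + 2 * ((inner ℂ (‖kx‖⁻¹ • kx) (‖ky‖⁻¹ • ky) : ℂ)
              * (inner ℂ (‖ky‖⁻¹ • ky) (‖kz‖⁻¹ • kz) : ℂ)
              * (inner ℂ (‖kz‖⁻¹ • kz) (‖kx‖⁻¹ • kx) : ℂ)).re)
        / (deltaPair kx ky ^ 2 * deltaPair kx kz ^ 2) :=
  delta_invariant_subspace_three_points_general kx ky kz hxy hxz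
end

section
/- Fix two points x, y and complex numbers K_{xx}, K_{yy} > 0 (real), K_{xy} ∈ ℂ, and A_{xx}, A_{yy} ∈ [0,1), A_{xy} ∈ ℂ with |A_{xy}|² ≤ A_{xx}·A_{yy}. Define δ_K = √(1 − |K_{xy}|²/(K_{xx}K_{yy})). Then: (i) if A_{xx}, A_{yy} > 0, the distance computed from the kernel A·K, namely δ_{AK} = √(1 − |A_{xy}K_{xy}|²/(A_{xx}K_{xx}·A_{yy}K_{yy})), satisfies δ_{AK} ≥ δ_K; and (ii) the distance computed from the kernel (1−A)·K, namely δ_{(1−A)K} = √(1 − |(1−A_{xy})K_{xy}|²/((1−A_{xx})K_{xx}·(1−A_{yy})K_{yy})), satisfies δ_{(1−A)K} ≤ δ_K; the key inequality being |1 − A_{xy}|² ≥ (1 − A_{xx})(1 − A_{yy}). -/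
/-- two-point monotonicity for invariant subspaces of
complete Nevanlinna–Pick spaces. Fix `K_{xx}, K_{yy} > 0`, `K_{xy} ∈ ℂ`, and
`A_{xx}, A_{yy} ∈ [0,1)`, `A_{xy} ∈ ℂ` with `|A_{xy}|² ≤ A_{xx}A_{yy}`, and
set `δ_K = √(1 − |K_{xy}|²/(K_{xx}K_{yy}))`. Then:
(i) if `A_{xx}, A_{yy} > 0` then `δ_{AK} ≥ δ_K`;
(ii) `δ_{(1−A)K} ≤ δ_K`, the key inequality being
`|1 − A_{xy}|² ≥ (1 − A_{xx})(1 − A_{yy})`. -/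
theorem np_two_point_monotonicity
    (Kxx Kyy : ℝ) (hKxx : 0 < Kxx) (hKyy : 0 < Kyy) (Kxy : ℂ)
    (Axx Ayy : ℝ) (hAxx0 : 0 ≤ Axx) (hAxx1 : Axx < 1) (hAyy0 : 0 ≤ Ayy) (hAyy1 : Ayy < 1)
    (Axy : ℂ) (hA : ‖Axy‖ ^ 2 ≤ Axx * Ayy) :
    ((0 < Axx → 0 < Ayy →
      Real.sqrt (1 - ‖Axy * Kxy‖ ^ 2 / ((Axx * Kxx) * (Ayy * Kyy)))
        ≥ Real.sqrt (1 - ‖Kxy‖ ^ 2 / (Kxx * Kyy)))) ∧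
    (Real.sqrt (1 - ‖(1 - Axy) * Kxy‖ ^ 2 / (((1 - Axx) * Kxx) * ((1 - Ayy) * Kyy)))
        ≤ Real.sqrt (1 - ‖Kxy‖ ^ 2 / (Kxx * Kyy))) ∧
    ‖(1 : ℂ) - Axy‖ ^ 2 ≥ (1 - Axx) * (1 - Ayy) := by
  set t := ‖Axy‖ with ht
  have ht0 : 0 ≤ t := norm_nonneg _
  have h2t : 2 * t ≤ Axx + Ayy := by
    nlinarith [sq_nonneg (Axx - Ayy), sq_nonneg (Axx + Ayy - 2*t)]
  have ht1 : t < 1 := by nlinarith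
  have key : ‖(1 : ℂ) - Axy‖ ^ 2 ≥ (1 - Axx) * (1 - Ayy) := by
    have h1 : (1 : ℝ) - t ≤ ‖(1 : ℂ) - Axy‖ := by
      have := norm_sub_norm_le (1 : ℂ) Axy
      simpa using this
    have h2 : (1 - t) ^ 2 ≤ ‖(1 : ℂ) - Axy‖ ^ 2 :=
      pow_le_pow_left₀ (by linarith) h1 2
    nlinarith [sq_nonneg (Axx - Ayy),
      mul_nonneg (by linarith : (0:ℝ) ≤ Axx + Ayy - 2*t)
        (by linarith : (0:ℝ) ≤ 4 - Axx - Ayy - 2*t)]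
  refine ⟨?_, ?_, key⟩
  · intro hAxx hAyy
    apply Real.sqrt_le_sqrt
    have hd1 : 0 < Axx * Kxx * (Ayy * Kyy) :=
      mul_pos (mul_pos hAxx hKxx) (mul_pos hAyy hKyy)
    have hd2 : 0 < Kxx * Kyy := by positivity
    rw [norm_mul, mul_pow, sub_le_sub_iff_left, div_le_div_iff₀ hd1 hd2]
    have h3 : ‖Kxy‖^2 * (t^2) ≤ ‖Kxy‖^2 * (Axx * Ayy) :=
      mul_le_mul_of_nonneg_left hA (sq_nonneg _)
    nlinarith [mul_le_mul_of_nonneg_right h3 hd2.le]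
  · apply Real.sqrt_le_sqrt
    have h1x : (0:ℝ) < 1 - Axx := by linarith
    have h1y : (0:ℝ) < 1 - Ayy := by linarith
    have hd1 : 0 < (1 - Axx) * Kxx * ((1 - Ayy) * Kyy) :=
      mul_pos (mul_pos h1x hKxx) (mul_pos h1y hKyy)
    have hd2 : 0 < Kxx * Kyy := by positivity
    rw [norm_mul, mul_pow, sub_le_sub_iff_left, div_le_div_iff₀ hd2 hd1]
    have h3 : ‖Kxy‖^2 * ((1 - Axx) * (1 - Ayy)) ≤ ‖Kxy‖^2 * ‖(1 : ℂ) - Axy‖^2 :=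
      mul_le_mul_of_nonneg_left key (sq_nonneg _)
    nlinarith [mul_le_mul_of_nonneg_right h3 hd2.le]
end

section
/- Let K(z,w) = (1 − w̄z)^{−2} be the Bergman kernel of the unit disk and let K_{J^⊥}(z,w) = 1 + 2w̄z be the reproducing kernel of the orthogonal complement of the invariant subspace J = {f : f(0) = f′(0) = 0}. Define δ_H(t,−t)² = 1 − (1−t²)⁴/(1+t²)⁴ and δ_{J^⊥}(t,−t)² = 1 − (1−2t²)²/(1+2t²)² for t ∈ (0,1) (these are δ_K and δ_{K_{J^⊥}} evaluated at the pair (t,−t)). Then there exists ε > 0 such that for all t ∈ (0,ε), δ_{J^⊥}(t,−t) > δ_H(t,−t); and there exists ε′ ∈ (0,1) such that for all t ∈ (ε′,1), δ_{J^⊥}(t,−t) < δ_H(t,−t). Equivalently: (1−2t²)²/(1+2t²)² < (1−t²)⁴/(1+t²)⁴ for t near 0, and the reverse strict inequality holds for t near 1. -/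
lemma berg_den1 (t : ℝ) : (0:ℝ) < (1 + 2 * t ^ 2) ^ 2 := by positivity

lemma berg_den2 (t : ℝ) : (0:ℝ) < (1 + t ^ 2) ^ 4 := by positivity

lemma berg_ratio1_le_one (t : ℝ) :
    (1 - 2 * t ^ 2) ^ 2 / (1 + 2 * t ^ 2) ^ 2 ≤ 1 := by
  rw [div_le_one (berg_den1 t)]; nlinarith [sq_nonneg t, sq_nonneg (t^2)]

lemma berg_ratio2_le_one (t : ℝ) :
    (1 - t ^ 2) ^ 4 / (1 + t ^ 2) ^ 4 ≤ 1 := by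
  rw [div_le_one (berg_den2 t)]
  nlinarith [sq_nonneg t, sq_nonneg (t^2), sq_nonneg (t^3), sq_nonneg (t^4)]

/-- failure of monotonicity for the Bergman space. With
`δ_H(t,−t)² = 1 − (1−t²)⁴/(1+t²)⁴` (from the Bergman kernel
`K(z,w) = (1 − w̄z)⁻²`) and `δ_{J^⊥}(t,−t)² = 1 − (1−2t²)²/(1+2t²)²` (from
the kernel `K_{J^⊥}(z,w) = 1 + 2w̄z` of the orthocomplement of
`J = {f : f(0) = f′(0) = 0}`): there is `ε > 0` with
`δ_{J^⊥}(t,−t) > δ_H(t,−t)` for all `t ∈ (0,ε)`, and there is `ε′ ∈ (0,1)`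
with `δ_{J^⊥}(t,−t) < δ_H(t,−t)` for all `t ∈ (ε′,1)`; equivalently
`(1−2t²)²/(1+2t²)² < (1−t²)⁴/(1+t²)⁴` near `0` and the reverse strict
inequality near `1`. -/
theorem bergman_orthocomplement_comparison :
    (∃ ε : ℝ, 0 < ε ∧ ∀ t : ℝ, t ∈ Set.Ioo 0 ε →
      Real.sqrt (1 - (1 - 2 * t ^ 2) ^ 2 / (1 + 2 * t ^ 2) ^ 2)
        > Real.sqrt (1 - (1 - t ^ 2) ^ 4 / (1 + t ^ 2) ^ 4) ∧
      (1 - 2 * t ^ 2) ^ 2 / (1 + 2 * t ^ 2) ^ 2 < (1 - t ^ 2) ^ 4 / (1 + t ^ 2) ^ 4) ∧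
    (∃ ε' : ℝ, ε' ∈ Set.Ioo (0 : ℝ) 1 ∧ ∀ t : ℝ, t ∈ Set.Ioo ε' 1 →
      Real.sqrt (1 - (1 - 2 * t ^ 2) ^ 2 / (1 + 2 * t ^ 2) ^ 2)
        < Real.sqrt (1 - (1 - t ^ 2) ^ 4 / (1 + t ^ 2) ^ 4) ∧
      (1 - 2 * t ^ 2) ^ 2 / (1 + 2 * t ^ 2) ^ 2 > (1 - t ^ 2) ^ 4 / (1 + t ^ 2) ^ 4) := by
  constructor
  · refine ⟨3/4, by norm_num, fun t ht => ?_⟩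
    obtain ⟨ht0, ht1⟩ := ht
    have hcore : (1 - 2 * t ^ 2) ^ 2 / (1 + 2 * t ^ 2) ^ 2
        < (1 - t ^ 2) ^ 4 / (1 + t ^ 2) ^ 4 := by
      rw [div_lt_div_iff₀ (berg_den1 t) (berg_den2 t)]
      nlinarith [pow_pos ht0 6, sq_nonneg t, mul_pos (pow_pos ht0 6) (pow_pos ht0 4),
        pow_lt_pow_left₀ ht1 ht0.le (n := 4) (by norm_num)]
    refine ⟨?_, hcore⟩
    apply Real.sqrt_lt_sqrt
    · linarith [berg_ratio2_le_one t]
    · linarith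
  · refine ⟨4/5, by norm_num, fun t ht => ?_⟩
    obtain ⟨ht0, ht1⟩ := ht
    have h0 : (0:ℝ) < t := by linarith
    have hcore : (1 - t ^ 2) ^ 4 / (1 + t ^ 2) ^ 4
        < (1 - 2 * t ^ 2) ^ 2 / (1 + 2 * t ^ 2) ^ 2 := by
      rw [div_lt_div_iff₀ (berg_den2 t) (berg_den1 t)]
      nlinarith [pow_pos h0 6, pow_lt_pow_left₀ ht0 (by norm_num) (n := 4) (by norm_num)]
    refine ⟨?_, hcore⟩
    apply Real.sqrt_lt_sqrt
    · linarith [berg_ratio1_le_one t]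
    · linarith
end

section
/- Let Θ : 𝔻 → 𝔻 be a holomorphic self-map of the open unit disk and define j(z,w) = (1 − conj(Θ(z))·Θ(w)) / (1 − z̄w) for z, w ∈ 𝔻 (the reproducing kernel of the orthogonal complement of the shift-invariant subspace Θ·H² of the Hardy space when Θ is inner). Then for all z, w ∈ 𝔻: 1 − |j(z,w)|²/(j(z,z)j(w,w)) = (ρ(z,w)² − ρ(Θ(z),Θ(w))²) / (1 − ρ(Θ(z),Θ(w))²), where ρ(z,w) = |(z−w)/(1−z̄w)| is the pseudohyperbolic distance. Consequently δ_{J^⊥}(z,w) = √((ρ(z,w)² − ρ(Θ(z),Θ(w))²)/(1 − ρ(Θ(z),Θ(w))²)) ≤ ρ(z,w), with equality if and only if Θ(z) = Θ(w). -/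
/-- Auxiliary: `|1 − z̄w|² = (1−|z|²)(1−|w|²) + |z−w|²`. -/
lemma aux_key_sq (z w : ℂ) :
    ‖1 - (starRingEnd ℂ) z * w‖^2 = (1-‖z‖^2)*(1-‖w‖^2) + ‖z-w‖^2 := by
  have h : ∀ a : ℂ, ‖a‖^2 = Complex.normSq a := fun a => by
    rw [Complex.normSq_eq_norm_sq]
  simp only [h, Complex.normSq_apply, Complex.sub_re, Complex.sub_im, Complex.mul_re,
    Complex.mul_im, Complex.conj_re, Complex.conj_im, Complex.one_re, Complex.one_im]
  ring

lemma aux_one_sub_conj_ne (z w : ℂ) (hz : ‖z‖ < 1) (hw : ‖w‖ < 1) :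
    1 - (starRingEnd ℂ) z * w ≠ 0 := by
  intro h
  have : ‖(starRingEnd ℂ) z * w‖ < 1 := by
    rw [norm_mul, RCLike.norm_conj]
    nlinarith [norm_nonneg z, norm_nonneg w]
  rw [sub_eq_zero] at h
  rw [← h] at this
  simp at this

lemma aux_norm_diag (u : ℂ) (hu : ‖u‖ < 1) :
    ‖1 - (starRingEnd ℂ) u * u‖ = 1 - ‖u‖^2 := by
  have h1 : (starRingEnd ℂ) u * u = ((‖u‖^2 : ℝ) : ℂ) := by
    rw [Complex.conj_mul']; push_cast; ring
  rw [h1, ← Complex.ofReal_one, ← Complex.ofReal_sub, Complex.norm_real,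
    Real.norm_of_nonneg (by nlinarith [norm_nonneg u])]

/-- Pure algebra behind the kernel identity. -/
lemma aux_alg (r s P Q A B C D : ℝ) (hA:0<A) (hB:0<B) (hC:0<C) (hD:0<D) (hP:0<P) (hQ:0<Q)
    (hP2 : P^2 = A*B + r^2) (hQ2 : Q^2 = C*D + s^2) :
    1 - (Q/P)^2/((C/A)*(D/B)) = ((r/P)^2-(s/Q)^2)/(1-(s/Q)^2) := by
  have h1 : 1-(s/Q)^2 = C*D/Q^2 := by
    rw [div_pow]; field_simp; linarith [hQ2]
  rw [h1]
  simp only [div_pow, hP2, hQ2]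
  have h2 : A*B + r^2 > 0 := by positivity
  have h3 : C*D + s^2 > 0 := by positivity
  field_simp
  ring

/-- Pure algebra behind the inequality and equality case. -/
lemma aux_alg2 (ρ σ : ℝ) (hρ0 : 0 ≤ ρ) (hρ1 : ρ < 1) (hσ0 : 0 ≤ σ) (hσ1 : σ < 1) :
    Real.sqrt ((ρ^2-σ^2)/(1-σ^2)) ≤ ρ ∧
    (Real.sqrt ((ρ^2-σ^2)/(1-σ^2)) = ρ ↔ (σ = 0 ∨ ρ = 0)) := by
  have hden : (0:ℝ) < 1 - σ^2 := by nlinarith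
  have hle : (ρ^2-σ^2)/(1-σ^2) ≤ ρ^2 := by
    rw [div_le_iff₀ hden]
    nlinarith [mul_nonneg (sq_nonneg σ) (by nlinarith : (0:ℝ) ≤ 1-ρ^2)]
  have h1 : Real.sqrt ((ρ^2-σ^2)/(1-σ^2)) ≤ ρ := by
    calc Real.sqrt ((ρ^2-σ^2)/(1-σ^2)) ≤ Real.sqrt (ρ^2) := Real.sqrt_le_sqrt hle
    _ = ρ := Real.sqrt_sq hρ0
  refine ⟨h1, ?_, ?_⟩
  · intro h
    by_cases hx : 0 ≤ (ρ^2-σ^2)/(1-σ^2)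
    · have h2 := Real.sq_sqrt hx
      rw [h] at h2
      rw [eq_div_iff (ne_of_gt hden)] at h2
      have h3 : σ^2 * (1-ρ^2) = 0 := by nlinarith
      have h4 : σ^2 = 0 := by
        rcases mul_eq_zero.mp h3 with h | h
        · exact h
        · nlinarith
      left; nlinarith
    · push_neg at hx
      have h2 : Real.sqrt ((ρ^2-σ^2)/(1-σ^2)) = 0 :=
        Real.sqrt_eq_zero_of_nonpos hx.le
      right; rw [← h, h2]
  · rintro (h | h)
    · rw [h]
      simp [Real.sqrt_sq hρ0]
    · rw [h]
      have : ((0:ℝ)^2-σ^2)/(1-σ^2) ≤ 0 := by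
        apply div_nonpos_of_nonpos_of_nonneg <;> nlinarith
      exact Real.sqrt_eq_zero_of_nonpos this

/-- The pseudohyperbolic distance `ρ(z,w) = |(z−w)/(1−z̄w)|` on the unit disk. -/
noncomputable def pseudoHyp (z w : ℂ) : ℝ :=
  ‖(z - w) / (1 - (starRingEnd ℂ) z * w)‖

/-- The reproducing kernel `j(z,w) = (1 − Θ(z)̄·Θ(w))/(1 − z̄w)` of the
orthogonal complement of the shift-invariant subspace `Θ·H²` of the Hardy
space (for `Θ` inner). -/
noncomputable def modelKernel (Θ : ℂ → ℂ) (z w : ℂ) : ℂ :=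
  (1 - (starRingEnd ℂ) (Θ z) * Θ w) / (1 - (starRingEnd ℂ) z * w)

set_option maxHeartbeats 1000000 in
/-- the distance of `(Θ·H²)^⊥`. Let `Θ : 𝔻 → 𝔻` be a
holomorphic self-map of the disk and `j(z,w) = (1 − Θ(z)̄Θ(w))/(1 − z̄w)`.
Then for all `z, w ∈ 𝔻`:
`1 − |j(z,w)|²/(j(z,z)j(w,w)) = (ρ(z,w)² − ρ(Θz,Θw)²)/(1 − ρ(Θz,Θw)²)`;
consequently `δ_{J^⊥}(z,w) ≤ ρ(z,w)`, with equality iff `Θ(z) = Θ(w)`. -/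
theorem invariant_subspace_orthocomplement_hardy (Θ : ℂ → ℂ)
    (hΘmap : ∀ z : ℂ, ‖z‖ < 1 → ‖Θ z‖ < 1)
    (hΘhol : DifferentiableOn ℂ Θ (Metric.ball 0 1))
    (z w : ℂ) (hz : ‖z‖ < 1) (hw : ‖w‖ < 1) :
    (1 - ‖modelKernel Θ z w‖ ^ 2 / (‖modelKernel Θ z z‖ * ‖modelKernel Θ w w‖)
      = (pseudoHyp z w ^ 2 - pseudoHyp (Θ z) (Θ w) ^ 2)
          / (1 - pseudoHyp (Θ z) (Θ w) ^ 2)) ∧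
    Real.sqrt ((pseudoHyp z w ^ 2 - pseudoHyp (Θ z) (Θ w) ^ 2)
          / (1 - pseudoHyp (Θ z) (Θ w) ^ 2))
        ≤ pseudoHyp z w ∧
    (Real.sqrt ((pseudoHyp z w ^ 2 - pseudoHyp (Θ z) (Θ w) ^ 2)
          / (1 - pseudoHyp (Θ z) (Θ w) ^ 2))
        = pseudoHyp z w ↔ Θ z = Θ w) := by
  have hu := hΘmap z hz
  have hv := hΘmap w hw
  set u := Θ z with hudef
  set v := Θ w with hvdef
  have hPne := aux_one_sub_conj_ne z w hz hw
  have hQne := aux_one_sub_conj_ne u v hu hv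
  have hPpos : 0 < ‖1 - (starRingEnd ℂ) z * w‖ := norm_pos_iff.mpr hPne
  have hQpos : 0 < ‖1 - (starRingEnd ℂ) u * v‖ := norm_pos_iff.mpr hQne
  set P := ‖1 - (starRingEnd ℂ) z * w‖ with hPdef
  set Q := ‖1 - (starRingEnd ℂ) u * v‖ with hQdef
  have hρ : pseudoHyp z w = ‖z-w‖ / P := norm_div _ _
  have hσ : pseudoHyp u v = ‖u-v‖ / Q := norm_div _ _
  have hjzw : ‖modelKernel Θ z w‖ = Q / P := norm_div _ _
  have hjzz : ‖modelKernel Θ z z‖ = (1-‖u‖^2)/(1-‖z‖^2) := by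
    rw [modelKernel, norm_div, ← hudef, aux_norm_diag u hu, aux_norm_diag z hz]
  have hjww : ‖modelKernel Θ w w‖ = (1-‖v‖^2)/(1-‖w‖^2) := by
    rw [modelKernel, norm_div, ← hvdef, aux_norm_diag v hv, aux_norm_diag w hw]
  have hP2 := aux_key_sq z w
  have hQ2 := aux_key_sq u v
  have hXz : (0:ℝ) < 1 - ‖z‖^2 := by nlinarith [norm_nonneg z]
  have hXw : (0:ℝ) < 1 - ‖w‖^2 := by nlinarith [norm_nonneg w]
  have hYu : (0:ℝ) < 1 - ‖u‖^2 := by nlinarith [norm_nonneg u]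
  have hYv : (0:ℝ) < 1 - ‖v‖^2 := by nlinarith [norm_nonneg v]
  -- basic facts about ρ and σ
  have hρ0 : 0 ≤ pseudoHyp z w := norm_nonneg _
  have hσ0 : 0 ≤ pseudoHyp u v := norm_nonneg _
  have hρ1 : pseudoHyp z w < 1 := by
    rw [hρ, div_lt_one hPpos]
    have h2 : ‖z-w‖^2 < P^2 := by
      rw [hP2]; linarith [mul_pos hXz hXw]
    exact lt_of_pow_lt_pow_left₀ 2 (le_of_lt hPpos) h2
  have hσ1 : pseudoHyp u v < 1 := by
    rw [hσ, div_lt_one hQpos]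
    have h2 : ‖u-v‖^2 < Q^2 := by
      rw [hQ2]; linarith [mul_pos hYu hYv]
    exact lt_of_pow_lt_pow_left₀ 2 (le_of_lt hQpos) h2
  have hσzero : pseudoHyp u v = 0 ↔ u = v := by
    rw [hσ, div_eq_zero_iff]
    constructor
    · rintro (h | h)
      · rwa [norm_eq_zero, sub_eq_zero] at h
      · exact absurd h (ne_of_gt hQpos)
    · intro h; left; rw [h]; simp
  have hρzero : pseudoHyp z w = 0 → z = w := by
    rw [hρ, div_eq_zero_iff]
    rintro (h | h)
    · rwa [norm_eq_zero, sub_eq_zero] at h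
    · exact absurd h (ne_of_gt hPpos)
  have h1 := aux_alg2 (pseudoHyp z w) (pseudoHyp u v) hρ0 hρ1 hσ0 hσ1
  refine ⟨?_, h1.1, ?_⟩
  · rw [hρ, hσ, hjzw, hjzz, hjww]
    exact aux_alg (‖z-w‖) (‖u-v‖) P Q (1-‖z‖^2) (1-‖w‖^2) (1-‖u‖^2) (1-‖v‖^2)
      hXz hXw hYu hYv hPpos hQpos hP2 hQ2
  · rw [h1.2]
    constructor
    · rintro (h | h)
      · exact hσzero.mp h
      · rw [hudef, hvdef, hρzero h]
    · intro h
      left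
      exact hσzero.mpr h
end
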